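/- Let A ∈ ℂ^{n×p}, x₀ ∈ ℂ^p, C > 0, and set D = 2C + 2√2 + 1. Let b_noise ∈ ℝⁿ with ‖b_noise‖₂ ≤ ‖Ax₀‖₂, set b = |Ax₀| + b_noise, and let V be a minimizer of d₁(V, F) over {V ∈ H_n : V ⪰ 0, diag(V) = b²}. Let P = AA† be the orthogonal projector onto the range of A and V∥ = PVP. If ‖V − (Ax₀)(Ax₀)*‖₂ > D‖Ax₀‖₂‖b_noise‖₂, then ‖V∥ − (Ax₀)(Ax₀)*‖₂ > 2C‖Ax₀‖₂‖b_noise‖₂. -/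

import Mathlib

open Matrix ComplexOrder

/-- The trace (nuclear) norm: sum of singular values. -/
noncomputable def traceNorm {n : ℕ} (M : Matrix (Fin n) (Fin n) ℂ) : ℝ :=
  ∑ i, Real.sqrt ((Matrix.posSemidef_conjTranspose_mul_self M).1.eigenvalues i)

/-- The Frobenius norm of a complex matrix. -/
noncomputable def frobNorm {n : ℕ} (M : Matrix (Fin n) (Fin n) ℂ) : ℝ :=
  Real.sqrt (∑ i, ∑ j, ‖M i j‖ ^ 2)

/-- The Euclidean norm of a complex vector. -/
noncomputable def cvecNorm {n : ℕ} (v : Fin n → ℂ) : ℝ :=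
  Real.sqrt (∑ i, ‖v i‖ ^ 2)

/-- The Euclidean norm of a real vector. -/
noncomputable def rvecNorm {n : ℕ} (v : Fin n → ℝ) : ℝ :=
  Real.sqrt (∑ i, (v i) ^ 2)

/-- `F = {V ∈ H_n : (I − AA†)V(I − AA†) = 0}`. -/
def Fset {n p : ℕ} (A : Matrix (Fin n) (Fin p) ℂ) (Ad : Matrix (Fin p) (Fin n) ℂ) :
    Set (Matrix (Fin n) (Fin n) ℂ) :=
  {V | V.IsHermitian ∧ (1 - A * Ad) * V * (1 - A * Ad) = 0}

/-- Trace-norm distance from `V` to `F`. -/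
noncomputable def d1F {n p : ℕ} (A : Matrix (Fin n) (Fin p) ℂ)
    (Ad : Matrix (Fin p) (Fin n) ℂ) (V : Matrix (Fin n) (Fin n) ℂ) : ℝ :=
  sInf {r : ℝ | ∃ W ∈ Fset A Ad, r = traceNorm (V - W)}

/-!
Write `P = AA†`, `Q = 1 - P` and `x = Ax₀`, so that `Qx = 0`. The rank-one matrix `yyᴴ`, where
`y` has the moduli `b` and the phases of `x`, is feasible, and `d₁(yyᴴ, F) ≤ ‖Qy‖² =
‖Q(y - x)‖² ≤ ‖b_noise‖²`. On the other hand `tr(QVQ) ≤ d₁(V, F)`, because `tr(Q · Q)` is bounded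
by the trace norm on Hermitian matrices and vanishes on `F`. So minimality of `V` forces
`tr(QVQ) ≤ ε² := ‖b_noise‖²`.

Factor `V = BᴴB`. Then `V - PVP = (PVQ + QVP) + QVQ`, where the first summand has Frobenius norm
`√2‖PVQ‖ ≤ √2‖B‖‖BQ‖` and the second has norm at most `‖BQ‖² = tr(QVQ)`. Since
`‖B‖² = tr V = ‖b‖² ≤ (‖x‖ + ε)²` and `ε ≤ ‖x‖`, we get `‖V - PVP‖₂ ≤ (2√2 + 1)‖x‖ε`. The claim
then follows from the triangle inequality.
-/

open scoped Matrix.Norms.Frobenius MatrixOrder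

theorem frobNorm_eq_norm {n : ℕ} (M : Matrix (Fin n) (Fin n) ℂ) : frobNorm M = ‖M‖ := by
  simp only [frobNorm, frobenius_norm_def, Real.rpow_two, Real.sqrt_eq_rpow]

section Frobenius

variable {𝕜 m n : Type*} [RCLike 𝕜] [Fintype m] [Fintype n]

theorem Matrix.frobenius_norm_sq_eq_re_trace (M : Matrix m n 𝕜) :
    ‖M‖ ^ 2 = RCLike.re (Mᴴ * M).trace := by
  rw [frobenius_norm_def, ← Real.sqrt_eq_rpow, Real.sq_sqrt (by positivity), trace,
    map_sum, Finset.sum_comm]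
  refine Finset.sum_congr rfl fun j _ => ?_
  simp only [diag_apply, mul_apply, conjTranspose_apply, map_sum, RCLike.star_def, RCLike.conj_mul]
  norm_cast

theorem Matrix.frobenius_norm_add_sq (M N : Matrix m n 𝕜) :
    ‖M + N‖ ^ 2 = ‖M‖ ^ 2 + ‖N‖ ^ 2 + 2 * RCLike.re (Mᴴ * N).trace := by
  have hNM : RCLike.re (Nᴴ * M).trace = RCLike.re (Mᴴ * N).trace := by
    rw [← conjTranspose_conjTranspose M, ← conjTranspose_mul, trace_conjTranspose,
      conjTranspose_conjTranspose, RCLike.star_def, RCLike.conj_re]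
  simp only [frobenius_norm_sq_eq_re_trace, conjTranspose_add, Matrix.add_mul, Matrix.mul_add,
    trace_add, map_add, hNM]
  ring

theorem IsStarProjection.frobenius_norm_mul_le [DecidableEq m] {Q : Matrix m m 𝕜}
    (hQ : IsStarProjection Q) (M : Matrix m n 𝕜) :
    ‖Q * M‖ ≤ ‖M‖ := by
  have hcross : (Q * M)ᴴ * ((1 - Q) * M) = 0 := by
    rw [conjTranspose_mul, ← star_eq_conjTranspose, hQ.isSelfAdjoint.star_eq, Matrix.mul_assoc,
      ← Matrix.mul_assoc Q, hQ.mul_one_sub_self, Matrix.zero_mul, Matrix.mul_zero]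
  have h := frobenius_norm_add_sq (Q * M) ((1 - Q) * M)
  rw [← Matrix.add_mul, add_sub_cancel, Matrix.one_mul, hcross, trace_zero, map_zero] at h
  nlinarith [norm_nonneg (Q * M), norm_nonneg M, sq_nonneg ‖(1 - Q) * M‖]

theorem Matrix.frobenius_norm_add_conjTranspose_of_mul_self_eq_zero {M : Matrix n n 𝕜}
    (hM : M * M = 0) : ‖M + Mᴴ‖ = √2 * ‖M‖ := by
  have hcross : Mᴴ * Mᴴ = 0 := by rw [← conjTranspose_mul, hM, conjTranspose_zero]
  have h := frobenius_norm_add_sq M Mᴴ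
  rw [hcross, trace_zero, map_zero, frobenius_norm_conjTranspose, mul_zero, add_zero,
    ← two_mul] at h
  rw [← Real.sqrt_sq (norm_nonneg (M + Mᴴ)), h, Real.sqrt_mul zero_le_two,
    Real.sqrt_sq (norm_nonneg M)]

theorem Matrix.PosSemidef.frobenius_norm_sub_conj_le [DecidableEq n] {V P : Matrix n n 𝕜}
    (hV : V.PosSemidef) (hP : IsStarProjection P) :
    ‖V - P * V * P‖ ≤ √2 * √(RCLike.re V.trace) * √(RCLike.re ((1 - P) * V * (1 - P)).trace) +
      RCLike.re ((1 - P) * V * (1 - P)).trace := by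
  obtain ⟨B, rfl⟩ := CStarAlgebra.nonneg_iff_eq_star_mul_self.mp hV.nonneg
  set Q := 1 - P with hQdef
  have hPs : Pᴴ = P := hP.isSelfAdjoint.star_eq
  have hQs : Qᴴ = Q := hP.one_sub.isSelfAdjoint.star_eq
  rw [star_eq_conjTranspose]
  have hBQ : RCLike.re (Q * (Bᴴ * B) * Q).trace = ‖B * Q‖ ^ 2 := by
    rw [frobenius_norm_sq_eq_re_trace, conjTranspose_mul, hQs]
    simp only [Matrix.mul_assoc]
  have hB : √(RCLike.re (Bᴴ * B).trace) = ‖B‖ := by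
    rw [← frobenius_norm_sq_eq_re_trace, Real.sqrt_sq (norm_nonneg B)]
  have hBP : ‖B * P‖ ≤ ‖B‖ := by
    rw [← frobenius_norm_conjTranspose, conjTranspose_mul, hPs, ← frobenius_norm_conjTranspose B]
    exact hP.frobenius_norm_mul_le Bᴴ
  set M := P * (Bᴴ * B) * Q
  have hMfactor : M = (B * P)ᴴ * (B * Q) := by
    rw [conjTranspose_mul, hPs]; simp only [M, Matrix.mul_assoc]
  have hMM : M * M = 0 := by
    rw [show M * M = P * (Bᴴ * B) * (Q * P) * (Bᴴ * B) * Q by simp only [M, Matrix.mul_assoc],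
      hP.one_sub_mul_self, Matrix.mul_zero, Matrix.zero_mul, Matrix.zero_mul]
  have hdecomp : Bᴴ * B - P * (Bᴴ * B) * P = (M + Mᴴ) + Q * (Bᴴ * B) * Q := by
    have hMs : Mᴴ = Q * (Bᴴ * B) * P := by
      simp only [M, conjTranspose_mul, conjTranspose_conjTranspose, hPs, hQs, Matrix.mul_assoc]
    rw [hMs]
    simp only [M, hQdef]
    noncomm_ring
  have hQVQ : ‖Q * (Bᴴ * B) * Q‖ ≤ ‖B * Q‖ ^ 2 := by
    rw [show Q * (Bᴴ * B) * Q = (B * Q)ᴴ * (B * Q) by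
      rw [conjTranspose_mul, hQs]; simp only [Matrix.mul_assoc], sq]
    exact (frobenius_norm_mul _ _).trans_eq (by rw [frobenius_norm_conjTranspose])
  rw [hBQ, Real.sqrt_sq (norm_nonneg _), hB, hdecomp]
  calc ‖M + Mᴴ + Q * (Bᴴ * B) * Q‖ ≤ ‖M + Mᴴ‖ + ‖Q * (Bᴴ * B) * Q‖ := norm_add_le _ _
    _ ≤ √2 * (‖B‖ * ‖B * Q‖) + ‖B * Q‖ ^ 2 := by
      rw [frobenius_norm_add_conjTranspose_of_mul_self_eq_zero hMM]
      gcongr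
      rw [hMfactor]
      refine (frobenius_norm_mul _ _).trans ?_
      rw [frobenius_norm_conjTranspose]
      gcongr
    _ = √2 * ‖B‖ * ‖B * Q‖ + ‖B * Q‖ ^ 2 := by ring

theorem Matrix.PosSemidef.frobenius_norm_sub_conj_le_of_le [DecidableEq n] {V P : Matrix n n 𝕜}
    (hV : V.PosSemidef) (hP : IsStarProjection P) {a ε : ℝ} (hε : 0 ≤ ε) (hεa : ε ≤ a)
    (htr : RCLike.re V.trace ≤ (a + ε) ^ 2)
    (hout : RCLike.re ((1 - P) * V * (1 - P)).trace ≤ ε ^ 2) :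
    ‖V - P * V * P‖ ≤ (2 * √2 + 1) * a * ε := by
  set t := RCLike.re ((1 - P) * V * (1 - P)).trace
  have hsqrt_tr : √(RCLike.re V.trace) * √t ≤ 2 * a * ε :=
    mul_le_mul ((Real.sqrt_le_iff.mpr ⟨by linarith, htr⟩).trans (by linarith))
      (Real.sqrt_le_iff.mpr ⟨hε, hout⟩)
      (Real.sqrt_nonneg _) (by linarith)
  have ht : t ≤ a * ε := hout.trans (by nlinarith)
  calc ‖V - P * V * P‖ ≤ √2 * √(RCLike.re V.trace) * √t + t := hV.frobenius_norm_sub_conj_le hP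
    _ ≤ √2 * (2 * a * ε) + a * ε := by rw [mul_assoc]; gcongr
    _ = (2 * √2 + 1) * a * ε := by ring

end Frobenius

theorem Matrix.isStarProjection_mul_of_mul_mul_eq {R m k : Type*} [Semiring R] [StarRing R]
    [Fintype m] [Fintype k] {A : Matrix m k R} {Ad : Matrix k m R} (hA : A * Ad * A = A)
    (hAd : (A * Ad)ᴴ = A * Ad) : IsStarProjection (A * Ad) where
  isIdempotentElem := by rw [IsIdempotentElem, ← Matrix.mul_assoc, hA]
  isSelfAdjoint := hAd

theorem traceNorm_nonneg {n : ℕ} (M : Matrix (Fin n) (Fin n) ℂ) : 0 ≤ traceNorm M :=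
  Finset.sum_nonneg fun _ _ => Real.sqrt_nonneg _

theorem Matrix.IsHermitian.trace_cfc {𝕜 n : Type*} [RCLike 𝕜] [Fintype n] [DecidableEq n]
    {A : Matrix n n 𝕜} (hA : A.IsHermitian) (f : ℝ → ℝ) :
    (cfc f A).trace = ∑ i, (f (hA.eigenvalues i) : 𝕜) := by
  rw [hA.cfc_eq, IsHermitian.cfc, Unitary.conjStarAlgAut_apply, trace_mul_cycle,
    Unitary.coe_star_mul_self, Matrix.one_mul, trace_diagonal]
  rfl

theorem traceNorm_eq_re_trace_abs {n : ℕ} (M : Matrix (Fin n) (Fin n) ℂ) :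
    traceNorm M = (CFC.abs M).trace.re := by
  rw [CFC.abs, CFC.sqrt_eq_real_sqrt _ (star_mul_self_nonneg M), cfcₙ_eq_cfc,
    star_eq_conjTranspose, (posSemidef_conjTranspose_mul_self M).1.trace_cfc, Complex.re_sum]
  rfl

theorem traceNorm_of_posSemidef {n : ℕ} {N : Matrix (Fin n) (Fin n) ℂ} (hN : N.PosSemidef) :
    traceNorm N = N.trace.re := by
  rw [traceNorm_eq_re_trace_abs, CFC.abs_of_nonneg N hN.nonneg]

theorem IsIdempotentElem.trace_mul_mul_self {R n : Type*} [CommSemiring R] [Fintype n]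
    {Q : Matrix n n R} (hQ : IsIdempotentElem Q) (N : Matrix n n R) :
    (Q * N * Q).trace = (N * Q).trace := by
  rw [trace_mul_cycle, hQ.eq, trace_mul_comm]

theorem Matrix.PosSemidef.trace_mul_isStarProjection_nonneg {𝕜 n : Type*} [RCLike 𝕜] [Fintype n]
    {N Q : Matrix n n 𝕜} (hN : N.PosSemidef) (hQ : IsStarProjection Q) :
    0 ≤ (N * Q).trace := by
  rw [← hQ.isIdempotentElem.trace_mul_mul_self]
  have := hN.conjTranspose_mul_mul_same Q
  rw [← star_eq_conjTranspose, hQ.isSelfAdjoint.star_eq] at this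
  exact this.trace_nonneg

theorem re_trace_conj_le_traceNorm {n : ℕ} {M Q : Matrix (Fin n) (Fin n) ℂ} (hM : M.IsHermitian)
    (hQ : IsStarProjection Q) : (Q * M * Q).trace.re ≤ traceNorm M := by
  have hle : 0 ≤ CFC.abs M - M := by
    rw [CFC.abs_sub_self M hM.isSelfAdjoint]
    exact smul_nonneg zero_le_two (CFC.negPart_nonneg M)
  have h₁ := PosSemidef.trace_mul_isStarProjection_nonneg hle.posSemidef hQ
  have h₂ := PosSemidef.trace_mul_isStarProjection_nonneg (CFC.abs_nonneg M).posSemidef hQ.one_sub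
  rw [traceNorm_eq_re_trace_abs, hQ.isIdempotentElem.trace_mul_mul_self]
  rw [Matrix.sub_mul, trace_sub, sub_nonneg] at h₁
  rw [Matrix.mul_sub, Matrix.mul_one, trace_sub, sub_nonneg] at h₂
  exact (Complex.le_def.mp h₁).1.trans (Complex.le_def.mp h₂).1

section DistanceToF

variable {n p : ℕ} {A : Matrix (Fin n) (Fin p) ℂ} {Ad : Matrix (Fin p) (Fin n) ℂ}
  {V : Matrix (Fin n) (Fin n) ℂ}

theorem d1F_le_traceNorm_compress (hP : IsStarProjection (A * Ad)) (hV : V.IsHermitian) :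
    d1F A Ad V ≤ traceNorm ((1 - A * Ad) * V * (1 - A * Ad)) := by
  set Q := 1 - A * Ad
  have hQ : IsStarProjection Q := hP.one_sub
  refine csInf_le ⟨0, fun r ⟨W, _, hr⟩ => hr ▸ traceNorm_nonneg _⟩
    ⟨V - Q * V * Q, ⟨?_, ?_⟩, by rw [sub_sub_cancel]⟩
  · refine hV.sub ?_
    simpa only [← star_eq_conjTranspose, hQ.isSelfAdjoint.star_eq] using
      isHermitian_conjTranspose_mul_mul Q hV
  · have hQQ : Q * (Q * V * Q) * Q = (Q * Q) * V * (Q * Q) := by simp only [Matrix.mul_assoc]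
    rw [Matrix.mul_sub Q V, Matrix.sub_mul _ _ Q, hQQ, hQ.isIdempotentElem.eq, sub_self]

theorem re_trace_compress_le_d1F (hP : IsStarProjection (A * Ad)) (hV : V.IsHermitian) :
    ((1 - A * Ad) * V * (1 - A * Ad)).trace.re ≤ d1F A Ad V := by
  set Q := 1 - A * Ad
  refine le_csInf ⟨_, 0, ⟨isHermitian_zero, by simp⟩, rfl⟩ ?_
  rintro r ⟨W, ⟨hW, hWF⟩, rfl⟩
  have hcompress : Q * V * Q = Q * (V - W) * Q := by
    rw [Matrix.mul_sub Q V W, Matrix.sub_mul _ _ Q, hWF, sub_zero]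
  rw [hcompress]
  exact re_trace_conj_le_traceNorm (hV.sub hW) hP.one_sub

end DistanceToF

theorem cvecNorm_eq_frobenius_norm_replicateCol {n : ℕ} (v : Fin n → ℂ) :
    cvecNorm v = ‖replicateCol (Fin 1) v‖ := by
  refine Eq.trans ?_ (frobenius_norm_replicateCol v).symm
  rw [EuclideanSpace.norm_eq, cvecNorm]

theorem cvecNorm_nonneg {n : ℕ} (v : Fin n → ℂ) : 0 ≤ cvecNorm v :=
  Real.sqrt_nonneg _

theorem cvecNorm_add_le {n : ℕ} (v w : Fin n → ℂ) : cvecNorm (v + w) ≤ cvecNorm v + cvecNorm w := by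
  simp only [cvecNorm_eq_frobenius_norm_replicateCol, replicateCol_add]
  exact norm_add_le _ _

theorem IsStarProjection.cvecNorm_mulVec_le {n : ℕ} {Q : Matrix (Fin n) (Fin n) ℂ}
    (hQ : IsStarProjection Q) (v : Fin n → ℂ) : cvecNorm (Q *ᵥ v) ≤ cvecNorm v := by
  rw [cvecNorm_eq_frobenius_norm_replicateCol, cvecNorm_eq_frobenius_norm_replicateCol,
    replicateCol_mulVec]
  exact hQ.frobenius_norm_mul_le _

theorem traceNorm_conj_vecMulVec {n : ℕ} {Q : Matrix (Fin n) (Fin n) ℂ} (hQ : IsSelfAdjoint Q)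
    (z : Fin n → ℂ) :
    traceNorm (Q * vecMulVec z (star z) * Q) = cvecNorm (Q *ᵥ z) ^ 2 := by
  have hfactor : Q * vecMulVec z (star z) * Q =
      (Q * replicateCol (Fin 1) z) * (Q * replicateCol (Fin 1) z)ᴴ := by
    rw [vecMulVec_eq (Fin 1), ← conjTranspose_replicateCol, conjTranspose_mul,
      ← star_eq_conjTranspose Q, hQ.star_eq]
    simp only [Matrix.mul_assoc]
    rfl
  rw [hfactor, traceNorm_of_posSemidef (posSemidef_self_mul_conjTranspose _), trace_mul_comm,
    cvecNorm_eq_frobenius_norm_replicateCol, replicateCol_mulVec, frobenius_norm_sq_eq_re_trace]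
  rfl

noncomputable def phaseAlign {n : ℕ} (z : Fin n → ℂ) (r : Fin n → ℝ) : Fin n → ℂ :=
  fun i => r i * Complex.exp (Complex.arg (z i) * Complex.I)

theorem norm_phaseAlign_apply {n : ℕ} (z : Fin n → ℂ) (r : Fin n → ℝ) (i : Fin n) :
    ‖phaseAlign z r i‖ = |r i| := by
  simp [phaseAlign, Complex.norm_exp_ofReal_mul_I]

theorem phaseAlign_mul_star_apply {n : ℕ} (z : Fin n → ℂ) (r : Fin n → ℝ) (i : Fin n) :
    phaseAlign z r i * star (phaseAlign z r i) = (r i : ℂ) ^ 2 := by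
  rw [Complex.star_def, Complex.mul_conj, Complex.normSq_eq_norm_sq, norm_phaseAlign_apply, sq_abs]
  push_cast; rfl

theorem cvecNorm_phaseAlign {n : ℕ} (z : Fin n → ℂ) (r : Fin n → ℝ) :
    cvecNorm (phaseAlign z r) = rvecNorm r := by
  simp only [cvecNorm, rvecNorm, norm_phaseAlign_apply, sq_abs]

theorem phaseAlign_sub_self {n : ℕ} (z : Fin n → ℂ) (r : Fin n → ℝ) :
    phaseAlign z r - z = phaseAlign z (fun i => r i - ‖z i‖) := by
  funext i
  conv_lhs => rw [Pi.sub_apply, ← Complex.norm_mul_exp_arg_mul_I (z i)]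
  simp only [phaseAlign]
  push_cast
  ring

theorem re_trace_eq_rvecNorm_sq {n : ℕ} {V : Matrix (Fin n) (Fin n) ℂ} {b : Fin n → ℝ}
    (hVdiag : ∀ i, V i i = ((b i : ℂ)) ^ 2) : V.trace.re = rvecNorm b ^ 2 := by
  rw [rvecNorm, Real.sq_sqrt (by positivity), trace, Complex.re_sum]
  simp only [diag_apply, hVdiag]
  norm_cast

theorem re_trace_compress_le_of_forall_d1F_le {n p : ℕ} {A : Matrix (Fin n) (Fin p) ℂ}
    {Ad : Matrix (Fin p) (Fin n) ℂ} {V : Matrix (Fin n) (Fin n) ℂ} {b : Fin n → ℝ}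
    (hP : IsStarProjection (A * Ad)) (hV : V.IsHermitian)
    (hVmin : ∀ V' : Matrix (Fin n) (Fin n) ℂ, V'.PosSemidef →
      (∀ i, V' i i = ((b i : ℂ)) ^ 2) → d1F A Ad V ≤ d1F A Ad V')
    {x y : Fin n → ℂ} (hx : (1 - A * Ad) *ᵥ x = 0)
    (hy : ∀ i, y i * star (y i) = ((b i : ℂ)) ^ 2) :
    ((1 - A * Ad) * V * (1 - A * Ad)).trace.re ≤ cvecNorm (y - x) ^ 2 :=
  calc ((1 - A * Ad) * V * (1 - A * Ad)).trace.re ≤ d1F A Ad V := re_trace_compress_le_d1F hP hV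
    _ ≤ d1F A Ad (vecMulVec y (star y)) := hVmin _ (posSemidef_vecMulVec_self_star y) hy
    _ ≤ traceNorm ((1 - A * Ad) * vecMulVec y (star y) * (1 - A * Ad)) :=
      d1F_le_traceNorm_compress hP (posSemidef_vecMulVec_self_star y).isHermitian
    _ = cvecNorm ((1 - A * Ad) *ᵥ (y - x)) ^ 2 := by
      rw [traceNorm_conj_vecMulVec hP.one_sub.isSelfAdjoint y, mulVec_sub, hx, sub_zero]
    _ ≤ cvecNorm (y - x) ^ 2 :=
      pow_le_pow_left₀ (cvecNorm_nonneg _) (hP.one_sub.cvecNorm_mulVec_le _) 2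

theorem ecart_V_PC_general {n p : ℕ}
    (A : Matrix (Fin n) (Fin p) ℂ) (Ad : Matrix (Fin p) (Fin n) ℂ)
    (hPenrose : A * Ad * A = A ∧ Ad * A * Ad = Ad ∧
      (A * Ad)ᴴ = A * Ad ∧ (Ad * A)ᴴ = Ad * A)
    (x₀ : Fin p → ℂ) (C : ℝ)
    (bnoise : Fin n → ℝ)
    (hbn : rvecNorm bnoise ≤ cvecNorm (A.mulVec x₀))
    (b : Fin n → ℝ) (hb : b = fun i => ‖A.mulVec x₀ i‖ + bnoise i)
    (V : Matrix (Fin n) (Fin n) ℂ)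
    (hVpsd : V.PosSemidef) (hVdiag : ∀ i, V i i = ((b i : ℂ)) ^ 2)
    (hVmin : ∀ V' : Matrix (Fin n) (Fin n) ℂ, V'.PosSemidef →
      (∀ i, V' i i = ((b i : ℂ)) ^ 2) → d1F A Ad V ≤ d1F A Ad V')
    (hfar : frobNorm (V - Matrix.vecMulVec (A.mulVec x₀) (star (A.mulVec x₀))) >
      (2 * C + 2 * Real.sqrt 2 + 1) * cvecNorm (A.mulVec x₀) * rvecNorm bnoise) :
    frobNorm ((A * Ad) * V * (A * Ad) -
        Matrix.vecMulVec (A.mulVec x₀) (star (A.mulVec x₀))) >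
      2 * C * cvecNorm (A.mulVec x₀) * rvecNorm bnoise := by
  set x := A *ᵥ x₀
  have hP := isStarProjection_mul_of_mul_mul_eq hPenrose.1 hPenrose.2.2.1
  have hQx : (1 - A * Ad) *ᵥ x = 0 := by
    rw [mulVec_mulVec, Matrix.sub_mul, Matrix.one_mul, hPenrose.1, sub_self, zero_mulVec]
  have hyx : cvecNorm (phaseAlign x b - x) = rvecNorm bnoise := by
    rw [phaseAlign_sub_self, cvecNorm_phaseAlign, hb]
    simp only [add_sub_cancel_left]
  have hout := re_trace_compress_le_of_forall_d1F_le hP hVpsd.isHermitian hVmin hQx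
    (phaseAlign_mul_star_apply x b)
  have htr : V.trace.re ≤ (cvecNorm x + rvecNorm bnoise) ^ 2 := by
    rw [re_trace_eq_rvecNorm_sq hVdiag, ← cvecNorm_phaseAlign x, ← hyx]
    refine pow_le_pow_left₀ (cvecNorm_nonneg _) ?_ 2
    simpa only [add_sub_cancel] using cvecNorm_add_le x (phaseAlign x b - x)
  have hoff := hVpsd.frobenius_norm_sub_conj_le_of_le (ε := rvecNorm bnoise) hP
    (Real.sqrt_nonneg _) hbn htr (by rwa [hyx] at hout)
  rw [frobNorm_eq_norm] at hfar ⊢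
  linarith [norm_sub_le_norm_sub_add_norm_sub V (A * Ad * V * (A * Ad)) (vecMulVec x (star x))]

/-- Let `b = |Ax₀| + b_noise` with `‖b_noise‖₂ ≤ ‖Ax₀‖₂`, let `V`
minimize `d₁(·, F)` over `{V ⪰ 0 : diag(V) = b²}`, and let `V∥ = PVP` with `P = AA†`.
If `‖V − (Ax₀)(Ax₀)*‖₂ > D‖Ax₀‖₂‖b_noise‖₂` with `D = 2C + 2√2 + 1`, then
`‖V∥ − (Ax₀)(Ax₀)*‖₂ > 2C‖Ax₀‖₂‖b_noise‖₂`. -/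
theorem ecart_V_PC {n p : ℕ}
    (A : Matrix (Fin n) (Fin p) ℂ) (Ad : Matrix (Fin p) (Fin n) ℂ)
    (hPenrose : A * Ad * A = A ∧ Ad * A * Ad = Ad ∧
      (A * Ad)ᴴ = A * Ad ∧ (Ad * A)ᴴ = Ad * A)
    (x₀ : Fin p → ℂ) (C : ℝ) (hC : 0 < C)
    (bnoise : Fin n → ℝ)
    (hbn : rvecNorm bnoise ≤ cvecNorm (A.mulVec x₀))
    (b : Fin n → ℝ) (hb : b = fun i => ‖A.mulVec x₀ i‖ + bnoise i)
    (V : Matrix (Fin n) (Fin n) ℂ)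
    (hVpsd : V.PosSemidef) (hVdiag : ∀ i, V i i = ((b i : ℂ)) ^ 2)
    (hVmin : ∀ V' : Matrix (Fin n) (Fin n) ℂ, V'.PosSemidef →
      (∀ i, V' i i = ((b i : ℂ)) ^ 2) → d1F A Ad V ≤ d1F A Ad V')
    (hfar : frobNorm (V - Matrix.vecMulVec (A.mulVec x₀) (star (A.mulVec x₀))) >
      (2 * C + 2 * Real.sqrt 2 + 1) * cvecNorm (A.mulVec x₀) * rvecNorm bnoise) :
    frobNorm ((A * Ad) * V * (A * Ad) -
        Matrix.vecMulVec (A.mulVec x₀) (star (A.mulVec x₀))) >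
      2 * C * cvecNorm (A.mulVec x₀) * rvecNorm bnoise :=
  ecart_V_PC_general A Ad hPenrose x₀ C bnoise hbn b hb V hVpsd hVdiag hVmin hfar
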